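/- arXiv:1611.01340 — 3 statements merged into one kernel-verified Lean document; each statement's English description precedes it below -/
import Mathlib

section
/- Let (g, [·,·], φ) be a regular Hom-Lie algebra over a field K, and let D, D' : g → g be derivations of g. Then [D,D']_φ = φ∘D∘φ⁻¹∘D'∘φ⁻¹ − φ∘D'∘φ⁻¹∘D∘φ⁻¹ is also a derivation of g. -/
/-- `D` is a derivation of the Hom-Lie algebra `(g, br, φ)`:
`D[x,y] = [φ(x), (φ⁻¹∘D∘φ)(y)] + [(φ⁻¹∘D∘φ)(x), φ(y)]`. -/
def IsHomLieDer {K : Type*} [Field K] {g : Type*} [AddCommGroup g] [Module K g]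
    (br : g →ₗ[K] g →ₗ[K] g) (φ : g ≃ₗ[K] g) (D : g →ₗ[K] g) : Prop :=
  ∀ x y : g,
    D (br x y) = br (φ x) (φ.symm (D (φ y))) + br (φ.symm (D (φ x))) (φ y)

/-- The bracket `[A,B]_φ = φ∘A∘φ⁻¹∘B∘φ⁻¹ − φ∘B∘φ⁻¹∘A∘φ⁻¹` on `gl(g)`. -/
def glBr {K : Type*} [Field K] {g : Type*} [AddCommGroup g] [Module K g]
    (φ : g ≃ₗ[K] g) (A B : g →ₗ[K] g) : g →ₗ[K] g :=
  φ.toLinearMap ∘ₗ A ∘ₗ φ.symm.toLinearMap ∘ₗ B ∘ₗ φ.symm.toLinearMap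
  - φ.toLinearMap ∘ₗ B ∘ₗ φ.symm.toLinearMap ∘ₗ A ∘ₗ φ.symm.toLinearMap

/-- If `D, D'` are derivations of a regular Hom-Lie algebra `(g, br, φ)`, then so is
`[D,D']_φ`. -/
theorem stmt3 {K : Type*} [Field K] {g : Type*} [AddCommGroup g] [Module K g]
    (br : g →ₗ[K] g →ₗ[K] g) (φ : g ≃ₗ[K] g)
    (hskew : ∀ x y, br x y = - br y x)
    (hmul : ∀ x y, φ (br x y) = br (φ x) (φ y))
    (hjac : ∀ x y z,
      br (φ x) (br y z) + br (φ y) (br z x) + br (φ z) (br x y) = 0)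
    (D D' : g →ₗ[K] g) (hD : IsHomLieDer br φ D) (hD' : IsHomLieDer br φ D') :
    IsHomLieDer br φ (glBr φ D D') := by
  have hsm : ∀ a b : g, φ.symm (br a b) = br (φ.symm a) (φ.symm b) := by
    intro a b
    apply φ.injective
    simp [hmul]
  have step : ∀ (T : g →ₗ[K] g), IsHomLieDer br φ T → ∀ a b : g,
      T (φ.symm (br a b)) = br a (φ.symm (T b)) + br (φ.symm (T a)) b := by
    intro T hT a b
    rw [hsm, hT (φ.symm a) (φ.symm b)]
    simp
  have full : ∀ (T T' : g →ₗ[K] g), IsHomLieDer br φ T → IsHomLieDer br φ T' →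
      ∀ a b : g,
      T (φ.symm (T' (φ.symm (br a b))))
        = br a (φ.symm (T (φ.symm (T' b)))) + br (φ.symm (T a)) (φ.symm (T' b))
          + br (φ.symm (T' a)) (φ.symm (T b))
          + br (φ.symm (T (φ.symm (T' a)))) b := by
    intro T T' hT hT' a b
    rw [step T' hT' a b, map_add φ.symm, map_add T,
        step T hT a (φ.symm (T' b)), step T hT (φ.symm (T' a)) b]
    abel
  intro x y
  have happ : ∀ z : g, glBr φ D D' z
      = φ (D (φ.symm (D' (φ.symm z)))) - φ (D' (φ.symm (D (φ.symm z)))) := by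
    intro z
    simp [glBr]
  rw [happ, happ (φ y), happ (φ x), map_sub φ.symm, map_sub φ.symm]
  simp only [LinearEquiv.symm_apply_apply, LinearEquiv.apply_symm_apply]
  rw [full D D' hD hD' x y, full D' D hD' hD x y]
  simp only [map_add, map_sub, hmul, LinearEquiv.apply_symm_apply,
    LinearMap.sub_apply, LinearMap.add_apply]
  abel
end

section
/- Let (g, [·,·], φ) be a regular Hom-Lie algebra over a field K, and let Der(g) be the set of derivations of g. Then (Der(g), [·,·]_φ, Ad_φ) is itself a regular Hom-Lie algebra: Der(g) is a linear subspace of gl(g) closed under [·,·]_φ and invariant under Ad_φ and Ad_φ⁻¹, [·,·]_φ restricted to Der(g) is bilinear and skew-symmetric, Ad_φ preserves the bracket on Der(g), and the Hom-Jacobi identity [Ad_φ(D₁),[D₂,D₃]_φ]_φ + [Ad_φ(D₂),[D₃,D₁]_φ]_φ + [Ad_φ(D₃),[D₁,D₂]_φ]_φ = 0 holds for all D₁,D₂,D₃ ∈ Der(g). -/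
/-- The map `Ad_φ(A) = φ∘A∘φ⁻¹`. -/
def glAd {K : Type*} [Field K] {g : Type*} [AddCommGroup g] [Module K g]
    (φ : g ≃ₗ[K] g) (A : g →ₗ[K] g) : g →ₗ[K] g :=
  φ.toLinearMap ∘ₗ A ∘ₗ φ.symm.toLinearMap

/-- `(Der(g), [·,·]_φ, Ad_φ)` is a regular Hom-Lie algebra, a Hom-Lie subalgebra
of `(gl(g), [·,·]_φ, Ad_φ)`. -/
theorem stmt4 {K : Type*} [Field K] {g : Type*} [AddCommGroup g] [Module K g]
    (br : g →ₗ[K] g →ₗ[K] g) (φ : g ≃ₗ[K] g)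
    (hskew : ∀ x y, br x y = - br y x)
    (hmul : ∀ x y, φ (br x y) = br (φ x) (φ y))
    (hjac : ∀ x y z,
      br (φ x) (br y z) + br (φ y) (br z x) + br (φ z) (br x y) = 0) :
    -- Der(g) is a linear subspace of gl(g)
    IsHomLieDer br φ (0 : g →ₗ[K] g) ∧
    (∀ D D' : g →ₗ[K] g, IsHomLieDer br φ D → IsHomLieDer br φ D' →
      IsHomLieDer br φ (D + D')) ∧
    (∀ (c : K) (D : g →ₗ[K] g), IsHomLieDer br φ D → IsHomLieDer br φ (c • D)) ∧
    -- closed under the bracket [·,·]_φ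
    (∀ D D' : g →ₗ[K] g, IsHomLieDer br φ D → IsHomLieDer br φ D' →
      IsHomLieDer br φ (glBr φ D D')) ∧
    -- invariant under Ad_φ and Ad_φ⁻¹
    (∀ D : g →ₗ[K] g, IsHomLieDer br φ D → IsHomLieDer br φ (glAd φ D)) ∧
    (∀ D : g →ₗ[K] g, IsHomLieDer br φ D → IsHomLieDer br φ (glAd φ.symm D)) ∧
    -- [·,·]_φ is bilinear
    (∀ (A A' B : g →ₗ[K] g) (c : K),
      glBr φ (A + A') B = glBr φ A B + glBr φ A' B ∧
      glBr φ (c • A) B = c • glBr φ A B ∧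
      glBr φ B (A + A') = glBr φ B A + glBr φ B A' ∧
      glBr φ B (c • A) = c • glBr φ B A) ∧
    -- [·,·]_φ is skew-symmetric
    (∀ D D' : g →ₗ[K] g, glBr φ D D' = - glBr φ D' D) ∧
    -- Ad_φ preserves the bracket
    (∀ D D' : g →ₗ[K] g, IsHomLieDer br φ D → IsHomLieDer br φ D' →
      glAd φ (glBr φ D D') = glBr φ (glAd φ D) (glAd φ D')) ∧
    -- Hom-Jacobi identity on Der(g)
    (∀ D₁ D₂ D₃ : g →ₗ[K] g, IsHomLieDer br φ D₁ → IsHomLieDer br φ D₂ →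
      IsHomLieDer br φ D₃ →
      glBr φ (glAd φ D₁) (glBr φ D₂ D₃) + glBr φ (glAd φ D₂) (glBr φ D₃ D₁)
        + glBr φ (glAd φ D₃) (glBr φ D₁ D₂) = 0) := by

  have hmul' : ∀ x y : g, φ.symm (br x y) = br (φ.symm x) (φ.symm y) := by
    intro x y
    apply φ.injective
    rw [hmul, φ.apply_symm_apply, φ.apply_symm_apply, φ.apply_symm_apply]
  refine ⟨?_, ?_, ?_, ?_, ?_, ?_, ?_, ?_, ?_, ?_⟩
  · intro x y; simp
  · intro D D' hD hD' x y
    simp only [LinearMap.add_apply, hD x y, hD' x y, map_add]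
    abel
  · intro c D hD x y
    rw [IsHomLieDer] at hD
    simp only [LinearMap.smul_apply, hD, map_smul, smul_add]
  · intro D D' hD hD' x y
    rw [IsHomLieDer] at hD hD'
    simp only [glBr, LinearMap.sub_apply, LinearMap.comp_apply, LinearEquiv.coe_coe,
      map_sub, hmul', hD, hD', map_add, hmul, LinearEquiv.symm_apply_apply,
      LinearEquiv.apply_symm_apply]
    abel
  · intro D hD x y
    rw [IsHomLieDer] at hD
    simp only [glAd, LinearMap.comp_apply, LinearEquiv.coe_coe, hmul', hD, map_add,
      hmul, LinearEquiv.symm_apply_apply, LinearEquiv.apply_symm_apply]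
  · intro D hD x y
    rw [IsHomLieDer] at hD
    simp only [glAd, LinearMap.comp_apply, LinearEquiv.coe_coe, LinearEquiv.symm_symm,
      hmul, hD, map_add, hmul', LinearEquiv.symm_apply_apply,
      LinearEquiv.apply_symm_apply]
  · intro A A' B c
    refine ⟨?_, ?_, ?_, ?_⟩ <;> ext x <;>
      simp only [glBr, LinearMap.sub_apply, LinearMap.add_apply, LinearMap.smul_apply,
        LinearMap.comp_apply, LinearEquiv.coe_coe, map_add, map_smul, smul_sub] <;>
      abel
  · intro D D' ; ext x
    simp only [glBr, LinearMap.sub_apply, LinearMap.neg_apply, LinearMap.comp_apply,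
      LinearEquiv.coe_coe, neg_sub]
  · intro D D' _ _ ; ext x
    simp only [glBr, glAd, LinearMap.sub_apply, LinearMap.comp_apply,
      LinearEquiv.coe_coe, map_sub, LinearEquiv.symm_apply_apply,
      LinearEquiv.apply_symm_apply]
  · intro D1 D2 D3 _ _ _ ; ext x
    simp only [glBr, glAd, LinearMap.sub_apply, LinearMap.add_apply,
      LinearMap.comp_apply, LinearEquiv.coe_coe, map_sub, map_add,
      LinearEquiv.symm_apply_apply, LinearEquiv.apply_symm_apply, LinearMap.zero_apply]
    abel
end

section
/- Let (g, [·,·], φ) be a regular Hom-Lie algebra over a field K, let D : g → g be a derivation of g, and let x ∈ g. Then [D, ad_x]_φ = ad_{D(x)}, i.e. φ∘D∘φ⁻¹∘ad_x∘φ⁻¹ − φ∘ad_x∘φ⁻¹∘D∘φ⁻¹ = ad_{D(x)} as linear maps on g. Consequently the inner derivations Inn(g) = {ad_x : x ∈ g} form an ideal of the Hom-Lie algebra (Der(g), [·,·]_φ, Ad_φ). -/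
/-- For a derivation `D` of a regular Hom-Lie algebra `(g, br, φ)` and `x ∈ g`,
`[D, ad_x]_φ = ad_{D(x)}`; consequently `Inn(g) = {ad_x : x ∈ g}` is an ideal of
`(Der(g), [·,·]_φ, Ad_φ)`. -/
theorem stmt7 {K : Type*} [Field K] {g : Type*} [AddCommGroup g] [Module K g]
    (br : g →ₗ[K] g →ₗ[K] g) (φ : g ≃ₗ[K] g)
    (hskew : ∀ x y, br x y = - br y x)
    (hmul : ∀ x y, φ (br x y) = br (φ x) (φ y))
    (hjac : ∀ x y z,
      br (φ x) (br y z) + br (φ y) (br z x) + br (φ z) (br x y) = 0)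
    (D : g →ₗ[K] g) (hD : IsHomLieDer br φ D) (x : g) :
    glBr φ D (br x) = br (D x) ∧
    -- Inn(g) ⊆ Der(g)
    (∀ x' : g, IsHomLieDer br φ (br x')) ∧
    -- Inn(g) is closed under bracketing with arbitrary derivations
    (∀ (D' : g →ₗ[K] g), IsHomLieDer br φ D' →
      ∀ x' : g, ∃ z : g, glBr φ D' (br x') = br z) ∧
    -- Inn(g) is invariant under Ad_φ
    (∀ x' : g, ∃ z : g, glAd φ (br x') = br z) := by
  have hmul' : ∀ a b : g, φ.symm (br a b) = br (φ.symm a) (φ.symm b) := by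
    intro a b
    apply φ.injective
    rw [φ.apply_symm_apply, hmul, φ.apply_symm_apply, φ.apply_symm_apply]
  have key : ∀ (D' : g →ₗ[K] g), IsHomLieDer br φ D' →
      ∀ x' : g, glBr φ D' (br x') = br (D' x') := by
    intro D' hD' x'
    ext y
    simp only [glBr, LinearMap.sub_apply, LinearMap.comp_apply,
      LinearEquiv.coe_coe]
    rw [hmul', hD' (φ.symm x') (φ.symm (φ.symm y))]
    simp only [map_add, φ.apply_symm_apply, hmul]
    abel
  refine ⟨key D hD x, ?_, fun D' hD' x' => ⟨D' x', key D' hD' x'⟩, ?_⟩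
  · intro x' a b
    have h := hjac (φ.symm x') a b
    rw [φ.apply_symm_apply] at h
    have h3 : br x' (br a b)
        = -(br (φ a) (br b (φ.symm x')) + br (φ b) (br (φ.symm x') a)) :=
      eq_neg_of_add_eq_zero_left (by rw [← add_assoc]; exact h)
    rw [h3, hmul', hmul', φ.symm_apply_apply, φ.symm_apply_apply]
    rw [hskew b (φ.symm x'), hskew (br (φ.symm x') a) (φ b)]
    simp only [map_neg]
    abel
  · intro x'
    refine ⟨φ x', ?_⟩
    ext y
    simp only [glAd, LinearMap.comp_apply, LinearEquiv.coe_coe]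
    rw [hmul, φ.apply_symm_apply]
end
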